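/- arXiv:math/0503169 — 4 statements merged into one kernel-verified Lean document; each statement's English description precedes it below -/
import Mathlib

section
/- Fix a real number c > 0. For every n ≥ 2, ∫_ℝ Γ̃_n(x) dμ_c(x) = (−1)^n·(1 − c); moreover, with d_0 = −1, d_1 = 1 and d_n = (−1)^n·(c − 1) for n ≥ 2, the polynomials Γ_n(x) = Γ̃_n(x) + d_n satisfy ∫_ℝ Γ_n(x) dμ_c(x) = 0 for every n ≥ 0. -/
open Polynomial MeasureTheory

/-- The argument substitution `u = (x - (1+c)) / (2√c)` as a real polynomial. -/
noncomputable def shiftArg (c : ℝ) : Polynomial ℝ :=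
  C (1 / (2 * Real.sqrt c)) * (X - C (1 + c))

/-- The shifted Chebyshev polynomials of the first kind:
`Γ̃_0 = 1`, `Γ̃_n(x) = 2 c^{n/2} T_n((x-(1+c))/(2√c))` for `n ≥ 1`. -/
noncomputable def Gammat (c : ℝ) : ℕ → Polynomial ℝ
  | 0 => 1
  | n + 1 =>
      C (2 * Real.sqrt c ^ (n + 1)) *
        (Polynomial.Chebyshev.T ℝ ((n : ℤ) + 1)).comp (shiftArg c)

/-- The Marchenko–Pastur distribution of parameter `c`:
`μ_c = max(1-c,0) δ_0 + (√((b-x)(x-a))/(2πx)) 1_{[a,b]}(x) dx`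
where `a = (√c-1)²`, `b = (√c+1)²`. -/
noncomputable def MarchenkoPastur (c : ℝ) : Measure ℝ :=
  ENNReal.ofReal (max (1 - c) 0) • Measure.dirac 0 +
    volume.withDensity fun x =>
      ENNReal.ofReal
        (Set.indicator (Set.Icc ((Real.sqrt c - 1) ^ 2) ((Real.sqrt c + 1) ^ 2))
          (fun x => Real.sqrt (((Real.sqrt c + 1) ^ 2 - x) * (x - (Real.sqrt c - 1) ^ 2)) /
            (2 * Real.pi * x)) x)

/-- The constants `d_0 = -1`, `d_1 = 1`, `d_n = (-1)^n (c-1)` for `n ≥ 2`. -/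
noncomputable def dcoef (c : ℝ) : ℕ → ℝ
  | 0 => -1
  | 1 => 1
  | n + 2 => (-1 : ℝ) ^ (n + 2) * (c - 1)

/-!
Substituting `x = 1 + c + 2√c cos θ`, the absolutely continuous part of `μ_c` becomes
`(2c/π) (sin² θ / x) dθ` on `[0, π]`, and `Γ̃_n(x) = 2 c^{n/2} cos nθ` for `n ≥ 1`. Multiplying by
`x` cancels the denominator (and kills the atom at `0`), so `∫ x Γ̃_n dμ_c` is a multiple of the
elementary integral `∫₀^π cos nθ sin² θ dθ`, which vanishes unless `n ∈ {0, 2}`. The three-term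
recurrence `Γ̃_{n+2} = (x - 1 - c) Γ̃_{n+1} - c Γ̃_n` then determines every `∫ Γ̃_n dμ_c` from the
total mass and the mean of `μ_c`. The only genuinely non-polynomial input is that `μ_c` has mass
`1`, which rests on the Poisson kernel integral `∫₀^π dθ / (1 + r² + 2r cos θ) = π / |1 - r²|`.
-/

open Real Set

theorem integral_cos_int_mul (k : ℤ) :
    ∫ θ in (0 : ℝ)..π, cos (k * θ) = if k = 0 then π else 0 := by
  split_ifs with hk
  · simp [hk]
  · have hk' : (k : ℝ) ≠ 0 := Int.cast_ne_zero.2 hk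
    rw [intervalIntegral.integral_comp_mul_left cos hk', integral_cos, sin_int_mul_pi]
    simp

theorem integral_cos_nat_mul_mul_sin_sq (n : ℕ) :
    ∫ θ in (0 : ℝ)..π, cos (n * θ) * sin θ ^ 2 =
      if n = 0 then π / 2 else if n = 2 then -(π / 4) else 0 := by
  have product_to_sum : ∀ θ : ℝ, cos (n * θ) * sin θ ^ 2 =
      cos ((n : ℤ) * θ) / 2 - cos (((n + 2 : ℤ) : ℝ) * θ) / 4
        - cos (((n - 2 : ℤ) : ℝ) * θ) / 4 := by
    intro θ
    push_cast
    rw [add_mul, sub_mul, cos_add, cos_sub, cos_two_mul, sin_two_mul, sin_sq θ]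
    ring
  have hint : ∀ k : ℤ, IntervalIntegrable (fun θ : ℝ => cos (k * θ)) volume 0 π :=
    fun k => (by fun_prop : Continuous fun θ : ℝ => cos (k * θ)).intervalIntegrable _ _
  simp_rw [product_to_sum]
  rw [intervalIntegral.integral_sub (((hint _).div_const _).sub ((hint _).div_const _))
      ((hint _).div_const _), intervalIntegral.integral_sub ((hint _).div_const _)
      ((hint _).div_const _)]
  simp only [intervalIntegral.integral_div, integral_cos_int_mul]
  rcases Nat.lt_trichotomy n 2 with h | rfl | h
  · interval_cases n <;> norm_num
  · norm_num
  · simp [show n ≠ 0 by omega, show n ≠ 2 by omega, show (n : ℤ) + 2 ≠ 0 by omega,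
      show (n : ℤ) - 2 ≠ 0 by omega]

theorem one_add_mul_cos_pos {r : ℝ} (hr : |r| < 1) (θ : ℝ) : 0 < 1 + r * cos θ := by
  have : |r * cos θ| < 1 := by
    rw [abs_mul]
    nlinarith [abs_cos_le_one θ, abs_nonneg r, abs_nonneg (cos θ)]
  linarith [neg_abs_le (r * cos θ)]

theorem sq_one_sub_abs_le_one_add_sq_add_two_mul_cos (r θ : ℝ) :
    (1 - |r|) ^ 2 ≤ 1 + r ^ 2 + 2 * r * cos θ := by
  have : |r * cos θ| ≤ |r| := by
    rw [abs_mul]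
    exact mul_le_of_le_one_right (abs_nonneg r) (abs_cos_le_one θ)
  nlinarith [neg_abs_le (r * cos θ), sq_abs r]

theorem one_add_sq_add_two_mul_cos_pos {r : ℝ} (hr : |r| ≠ 1) (θ : ℝ) :
    0 < 1 + r ^ 2 + 2 * r * cos θ :=
  (pow_two_pos_of_ne_zero (sub_ne_zero.2 hr.symm)).trans_le
    (sq_one_sub_abs_le_one_add_sq_add_two_mul_cos r θ)

theorem integral_inv_one_add_sq_add_two_mul_cos_of_abs_lt {r : ℝ} (hr : |r| < 1) :
    ∫ θ in (0 : ℝ)..π, (1 + r ^ 2 + 2 * r * cos θ)⁻¹ = π / (1 - r ^ 2) := by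
  have hr2 : r ^ 2 < 1 := by nlinarith [sq_abs r, abs_nonneg r]
  have hden := one_add_sq_add_two_mul_cos_pos hr.ne
  -- `θ - 2 arg (1 + r e^{iθ})` is an antiderivative of `(1 - r²) / |1 + r e^{iθ}|²`
  have hderiv : ∀ θ, HasDerivAt (fun θ => θ - 2 * arctan (r * sin θ / (1 + r * cos θ)))
      ((1 - r ^ 2) * (1 + r ^ 2 + 2 * r * cos θ)⁻¹) θ := by
    intro θ
    have hpos := one_add_mul_cos_pos hr θ
    have h := (hasDerivAt_id' θ).fun_sub ((((hasDerivAt_sin θ).const_mul r).fun_div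
      (((hasDerivAt_cos θ).const_mul r).const_add 1) hpos.ne').arctan.const_mul 2)
    refine h.congr_deriv ?_
    have := hden θ
    field_simp
    linear_combination (-r ^ 2 * (2 + 2 * r * cos θ)) * sin_sq_add_cos_sq θ
  have hcont : Continuous fun θ => (1 - r ^ 2) * (1 + r ^ 2 + 2 * r * cos θ)⁻¹ :=
    continuous_const.mul ((by fun_prop : Continuous fun θ => 1 + r ^ 2 + 2 * r * cos θ).inv₀
      fun θ => (hden θ).ne')
  have := intervalIntegral.integral_eq_sub_of_hasDerivAt (fun θ _ => hderiv θ)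
    (hcont.intervalIntegrable 0 π)
  rw [intervalIntegral.integral_const_mul] at this
  simp only [sin_pi, sin_zero, cos_pi, cos_zero, mul_zero, zero_div, arctan_zero, sub_zero] at this
  rw [eq_div_iff (by linarith), mul_comm, this]

theorem integral_inv_one_add_sq_add_two_mul_cos {r : ℝ} (hr : |r| ≠ 1) :
    ∫ θ in (0 : ℝ)..π, (1 + r ^ 2 + 2 * r * cos θ)⁻¹ = π / |1 - r ^ 2| := by
  rcases hr.lt_or_gt with hr | hr
  · rw [integral_inv_one_add_sq_add_two_mul_cos_of_abs_lt hr, abs_of_pos]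
    nlinarith [sq_abs r, abs_nonneg r]
  · have hr0 : r ≠ 0 := by rintro rfl; simp at hr; linarith
    have hinv : |r⁻¹| < 1 := by rw [abs_inv]; exact inv_lt_one_of_one_lt₀ hr
    have hscale : ∀ θ, (1 + r ^ 2 + 2 * r * cos θ)⁻¹
        = (r ^ 2)⁻¹ * (1 + r⁻¹ ^ 2 + 2 * r⁻¹ * cos θ)⁻¹ := by
      intro θ
      rw [← mul_inv]
      congr 1
      field_simp
      ring
    simp_rw [hscale]
    rw [intervalIntegral.integral_const_mul, integral_inv_one_add_sq_add_two_mul_cos_of_abs_lt hinv,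
      abs_of_neg (by nlinarith [sq_abs r]), neg_sub]
    have : r ^ 2 - 1 ≠ 0 := by nlinarith [sq_abs r]
    field_simp

theorem one_add_sq_add_two_mul_cos_pos_of_mem_Ioo {r θ : ℝ} (hr : 0 < r) (hθ : θ ∈ Ioo 0 π) :
    0 < 1 + r ^ 2 + 2 * r * cos θ := by
  have hcos : -1 < cos θ := by
    rw [← cos_pi]
    exact cos_lt_cos_of_nonneg_of_le_pi hθ.1.le le_rfl hθ.2
  nlinarith [sq_nonneg (1 - r)]

theorem integral_sin_sq_div_one_add_sq_add_two_mul_cos {r : ℝ} (hr : 0 < r) :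
    ∫ θ in (0 : ℝ)..π, sin θ ^ 2 / (1 + r ^ 2 + 2 * r * cos θ) =
      π * (1 + r ^ 2 - |1 - r ^ 2|) / (4 * r ^ 2) := by
  set φ : ℝ → ℝ := fun θ => 1 + r ^ 2 + 2 * r * cos θ with hφ
  set pole : ℝ → ℝ := fun θ => (1 - r ^ 2) ^ 2 * (φ θ)⁻¹ with hpole
  -- `sin² θ = 1 - cos² θ` is a quadratic polynomial in `φ θ`
  have partial_fractions : ∀ θ ∈ Ioo 0 π, sin θ ^ 2 / φ θ =
      (1 + r ^ 2) / (2 * r ^ 2) - φ θ / (4 * r ^ 2) - pole θ / (4 * r ^ 2) := by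
    intro θ hθ
    have : φ θ ≠ 0 := (one_add_sq_add_two_mul_cos_pos_of_mem_Ioo hr hθ).ne'
    simp only [hpole]
    field_simp
    linear_combination (8 * r ^ 2) * sin_sq_add_cos_sq θ
  have integral_pole : IntervalIntegrable pole volume 0 π ∧
      ∫ θ in (0 : ℝ)..π, pole θ = π * |1 - r ^ 2| := by
    by_cases h1 : r = 1
    · simp [hpole, h1]
    have hr1 : |r| ≠ 1 := by rwa [abs_of_pos hr]
    have hφ0 : ∀ θ, φ θ ≠ 0 := fun θ => (one_add_sq_add_two_mul_cos_pos hr1 θ).ne'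
    refine ⟨(continuous_const.mul ((by fun_prop : Continuous φ).inv₀ hφ0)).intervalIntegrable _ _,
      ?_⟩
    rw [intervalIntegral.integral_const_mul, integral_inv_one_add_sq_add_two_mul_cos hr1,
      ← sq_abs (1 - r ^ 2)]
    have : |1 - r ^ 2| ≠ 0 := by
      simp only [ne_eq, abs_eq_zero, sub_eq_zero]
      intro h; apply h1; nlinarith
    field_simp
  have integral_φ : ∫ θ in (0 : ℝ)..π, φ θ = (1 + r ^ 2) * π := by
    simp [hφ, integral_cos]
    ring
  have hφint : IntervalIntegrable φ volume 0 π :=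
    (by fun_prop : Continuous φ).intervalIntegrable _ _
  rw [intervalIntegral.integral_of_le pi_pos.le, integral_Ioc_eq_integral_Ioo,
    setIntegral_congr_fun measurableSet_Ioo partial_fractions,
    ← integral_Ioc_eq_integral_Ioo, ← intervalIntegral.integral_of_le pi_pos.le,
    intervalIntegral.integral_sub (intervalIntegrable_const.sub (hφint.div_const _))
      (integral_pole.1.div_const _),
    intervalIntegral.integral_sub intervalIntegrable_const (hφint.div_const _)]
  simp only [intervalIntegral.integral_div, intervalIntegral.integral_const]
  rw [integral_φ, integral_pole.2]
  field_simp
  ring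

section WithDensityOfReal

variable {α : Type*} [MeasurableSpace α] {μ : Measure α} {f : α → ℝ}

theorem integral_withDensity_ofReal (hf : Measurable f) (hf0 : 0 ≤ f) (g : α → ℝ) :
    ∫ x, g x ∂μ.withDensity (fun x => ENNReal.ofReal (f x)) = ∫ x, f x * g x ∂μ := by
  rw [integral_withDensity_eq_integral_toReal_smul hf.ennreal_ofReal
    (ae_of_all _ fun _ => ENNReal.ofReal_lt_top)]
  simp only [ENNReal.toReal_ofReal (hf0 _), smul_eq_mul]

theorem integrable_withDensity_ofReal_iff (hf : Measurable f) (hf0 : 0 ≤ f) {g : α → ℝ} :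
    Integrable g (μ.withDensity (fun x => ENNReal.ofReal (f x))) ↔
      Integrable (fun x => f x * g x) μ := by
  rw [integrable_withDensity_iff_integrable_smul' hf.ennreal_ofReal
    (ae_of_all _ fun _ => ENNReal.ofReal_lt_top)]
  simp only [ENNReal.toReal_ofReal (hf0 _), smul_eq_mul]

end WithDensityOfReal

namespace MarchenkoPastur

variable {c : ℝ}

noncomputable def param (c θ : ℝ) : ℝ := 1 + c + 2 * √c * cos θ

noncomputable def density (c x : ℝ) : ℝ :=
  √(((√c + 1) ^ 2 - x) * (x - (√c - 1) ^ 2)) / (2 * π * x)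

theorem param_eq (hc : 0 ≤ c) (θ : ℝ) : param c θ = 1 + √c ^ 2 + 2 * √c * cos θ := by
  rw [param, sq_sqrt hc]

@[fun_prop]
theorem continuous_param : Continuous (param c) := by
  unfold param
  fun_prop

theorem param_nonneg (hc : 0 ≤ c) (θ : ℝ) : 0 ≤ param c θ := by
  rw [param_eq hc]
  exact (sq_nonneg _).trans (sq_one_sub_abs_le_one_add_sq_add_two_mul_cos _ θ)

theorem image_param_Icc (hc : 0 < c) :
    param c '' Icc 0 π = Icc ((√c - 1) ^ 2) ((√c + 1) ^ 2) := by
  have hparam : param c = (fun u => 2 * √c * u + (1 + c)) ∘ cos := by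
    ext θ; simp only [param, Function.comp]; ring
  rw [hparam, image_comp, bijOn_cos.image_eq, image_affine_Icc' (by positivity)]
  congr 1 <;> linear_combination (-1 : ℝ) * sq_sqrt hc.le

theorem injOn_param (hc : 0 < c) : InjOn (param c) (Icc 0 π) := by
  intro θ hθ θ' hθ' h
  have : 2 * √c * cos θ = 2 * √c * cos θ' := by simpa [param] using h
  exact injOn_cos hθ hθ' (mul_left_cancel₀ (by positivity) this)

theorem hasDerivAt_param (c θ : ℝ) : HasDerivAt (param c) (-(2 * √c * sin θ)) θ := by
  have := ((hasDerivAt_cos θ).const_mul (2 * √c)).const_add (1 + c)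
  rwa [mul_neg] at this

theorem abs_deriv_param {θ : ℝ} (hθ : θ ∈ Icc 0 π) : |-(2 * √c * sin θ)| = 2 * √c * sin θ := by
  rw [abs_neg, abs_of_nonneg (mul_nonneg (by positivity) (sin_nonneg_of_nonneg_of_le_pi hθ.1 hθ.2))]

theorem setIntegral_Icc_eq_param (hc : 0 < c) (g : ℝ → ℝ) :
    ∫ x in Icc ((√c - 1) ^ 2) ((√c + 1) ^ 2), g x =
      ∫ θ in Icc 0 π, 2 * √c * sin θ * g (param c θ) := by
  rw [← image_param_Icc hc, integral_image_eq_integral_abs_deriv_smul measurableSet_Icc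
    (fun θ _ => (hasDerivAt_param c θ).hasDerivWithinAt) (injOn_param hc)]
  refine setIntegral_congr_fun measurableSet_Icc fun θ hθ => ?_
  rw [abs_deriv_param hθ, smul_eq_mul]

theorem integrableOn_Icc_iff_param (hc : 0 < c) (g : ℝ → ℝ) :
    IntegrableOn g (Icc ((√c - 1) ^ 2) ((√c + 1) ^ 2)) ↔
      IntegrableOn (fun θ => 2 * √c * sin θ * g (param c θ)) (Icc 0 π) := by
  rw [← image_param_Icc hc, integrableOn_image_iff_integrableOn_abs_deriv_smul measurableSet_Icc
    (fun θ _ => (hasDerivAt_param c θ).hasDerivWithinAt) (injOn_param hc)]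
  refine integrableOn_congr_fun (fun θ hθ => ?_) measurableSet_Icc
  rw [abs_deriv_param hθ, smul_eq_mul]

theorem sin_mul_density_param (hc : 0 ≤ c) {θ : ℝ} (hθ : θ ∈ Icc 0 π) :
    2 * √c * sin θ * density c (param c θ) = 2 * c / π * (sin θ ^ 2 / param c θ) := by
  have hsin := sin_nonneg_of_nonneg_of_le_pi hθ.1 hθ.2
  have hroot : ((√c + 1) ^ 2 - param c θ) * (param c θ - (√c - 1) ^ 2) =
      (2 * √c * sin θ) ^ 2 := by
    rw [param_eq hc]
    linear_combination (-4 * √c ^ 2) * sin_sq_add_cos_sq θ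
  rw [density, hroot, sqrt_sq (by positivity), ← mul_div_assoc, ← sq, mul_pow, mul_pow,
    sq_sqrt hc]
  ring

theorem sin_sq_div_param_le (hc : 0 < c) (θ : ℝ) : sin θ ^ 2 / param c θ ≤ (√c)⁻¹ := by
  have hsqrt : 0 < √c := sqrt_pos.2 hc
  refine div_le_of_le_mul₀ (param_nonneg hc.le θ) (inv_nonneg.2 hsqrt.le) ?_
  rw [param_eq hc.le, inv_mul_eq_div, le_div_iff₀ hsqrt]
  nlinarith [sin_sq_add_cos_sq θ, neg_one_le_cos θ, cos_le_one θ, sq_nonneg (1 - √c),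
    mul_nonneg hsqrt.le (sq_nonneg (1 + cos θ))]

theorem sin_sq_div_param_mul_param (hc : 0 ≤ c) (θ : ℝ) :
    sin θ ^ 2 / param c θ * param c θ = sin θ ^ 2 := by
  by_cases hp : param c θ = 0
  -- `param c θ` vanishes only for `c = 1` and `cos θ = -1`, where also `sin θ = 0`
  · have : sin θ ^ 2 = 0 := by
      rw [param_eq hc] at hp
      nlinarith [sin_sq_add_cos_sq θ, neg_one_le_cos θ, sq_nonneg (1 - √c), sqrt_nonneg c,
        mul_nonneg (sqrt_nonneg c) (sq_nonneg (1 + cos θ))]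
    rw [this, zero_div, zero_mul]
  · exact div_mul_cancel₀ _ hp

@[fun_prop]
theorem measurable_density : Measurable (density c) := by
  unfold density
  fun_prop

theorem density_nonneg {x : ℝ} (hx : x ∈ Icc ((√c - 1) ^ 2) ((√c + 1) ^ 2)) :
    0 ≤ density c x :=
  div_nonneg (sqrt_nonneg _) (mul_nonneg (by positivity) ((sq_nonneg _).trans hx.1))

theorem integrableOn_density_mul (hc : 0 < c) {g : ℝ → ℝ} (hg : Continuous g) :
    IntegrableOn (fun x => density c x * g x) (Icc ((√c - 1) ^ 2) ((√c + 1) ^ 2)) := by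
  obtain ⟨M, hM⟩ := isCompact_Icc.exists_bound_of_continuousOn
    (hg.comp continuous_param).continuousOn (s := Icc 0 π)
  rw [integrableOn_Icc_iff_param hc]
  refine Measure.integrableOn_of_bounded (M := 2 * c / π * (√c)⁻¹ * M) measure_Icc_lt_top.ne
    (Measurable.aestronglyMeasurable (by fun_prop)) ?_
  rw [ae_restrict_iff' measurableSet_Icc]
  refine ae_of_all _ fun θ hθ => ?_
  rw [← mul_assoc, sin_mul_density_param hc.le hθ, norm_mul, norm_mul,
    Real.norm_of_nonneg (by positivity), Real.norm_of_nonneg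
      (div_nonneg (sq_nonneg _) (param_nonneg hc.le θ))]
  gcongr
  · exact sin_sq_div_param_le hc θ
  · exact hM θ hθ

theorem eq_smul_dirac_add_withDensity (c : ℝ) : MarchenkoPastur c =
    ENNReal.ofReal (max (1 - c) 0) • Measure.dirac 0 + volume.withDensity fun x =>
      ENNReal.ofReal (indicator (Icc ((√c - 1) ^ 2) ((√c + 1) ^ 2)) (density c) x) := rfl

theorem integrable (hc : 0 < c) {g : ℝ → ℝ} (hg : Continuous g) :
    Integrable g (MarchenkoPastur c) := by
  rw [eq_smul_dirac_add_withDensity]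
  refine ((integrable_dirac (by simp)).smul_measure ENNReal.ofReal_ne_top).add_measure ?_
  rw [integrable_withDensity_ofReal_iff (measurable_density.indicator measurableSet_Icc)
    (indicator_nonneg fun _ => density_nonneg)]
  simp_rw [← indicator_mul_left]
  exact (integrable_indicator_iff measurableSet_Icc).2 (integrableOn_density_mul hc hg)

theorem integral_eq (hc : 0 < c) {g : ℝ → ℝ} (hg : Continuous g) :
    ∫ x, g x ∂MarchenkoPastur c =
      max (1 - c) 0 * g 0 + 2 * c / π * ∫ θ in 0..π, sin θ ^ 2 / param c θ * g (param c θ) := by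
  have hint := integrable hc hg
  rw [eq_smul_dirac_add_withDensity] at hint ⊢
  obtain ⟨hatom, hcont⟩ := integrable_add_measure.1 hint
  rw [integral_add_measure hatom hcont, integral_smul_measure, integral_dirac,
    ENNReal.toReal_ofReal (le_max_right _ _), smul_eq_mul,
    integral_withDensity_ofReal (measurable_density.indicator measurableSet_Icc)
      (indicator_nonneg fun _ => density_nonneg)]
  simp_rw [← indicator_mul_left]
  rw [integral_indicator measurableSet_Icc, setIntegral_Icc_eq_param hc,
    integral_Icc_eq_integral_Ioc, ← intervalIntegral.integral_of_le pi_pos.le,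
    ← intervalIntegral.integral_const_mul]
  congr 1
  refine intervalIntegral.integral_congr fun θ hθ => ?_
  rw [uIcc_of_le pi_pos.le] at hθ
  rw [← mul_assoc, sin_mul_density_param hc.le hθ, mul_assoc]

theorem isProbabilityMeasure (hc : 0 < c) : IsProbabilityMeasure (MarchenkoPastur c) := by
  have : IsFiniteMeasure (MarchenkoPastur c) :=
    (integrable_const_iff.1 (integrable hc (continuous_const (y := (1 : ℝ))))).resolve_left
      one_ne_zero
  have hmass : (MarchenkoPastur c).real univ = 1 := by
    have h := integral_eq hc (continuous_const (y := (1 : ℝ)))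
    simp only [integral_const, smul_eq_mul, mul_one, param_eq hc.le] at h
    rw [h, integral_sin_sq_div_one_add_sq_add_two_mul_cos (sqrt_pos.2 hc), sq_sqrt hc.le]
    have := pi_pos
    rcases le_total c 1 with hc1 | hc1
    · rw [max_eq_left (by linarith), abs_of_nonneg (by linarith)]
      field_simp
      ring
    · rw [max_eq_right (by linarith), abs_of_nonpos (by linarith)]
      field_simp
      ring
  exact ⟨by rw [← ENNReal.ofReal_toReal (measure_ne_top _ univ), ← measureReal_def, hmass,
    ENNReal.ofReal_one]⟩

theorem integral_id_mul (hc : 0 < c) {g : ℝ → ℝ} (hg : Continuous g) :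
    ∫ x, x * g x ∂MarchenkoPastur c = 2 * c / π * ∫ θ in 0..π, sin θ ^ 2 * g (param c θ) := by
  rw [integral_eq hc (g := fun x => x * g x) (by fun_prop), zero_mul, mul_zero, zero_add]
  simp_rw [← mul_assoc, sin_sq_div_param_mul_param hc.le]

/-- Unlike `Gammat`, the index `0` is not special-cased (`shiftedChebyshevT c 0 = 2`), so that the
three-term recurrence `shiftedChebyshevT_add_two` holds from `n = 0` on. -/
noncomputable def shiftedChebyshevT (c : ℝ) (n : ℕ) : ℝ[X] :=
  C (2 * √c ^ n) * (Chebyshev.T ℝ n).comp (shiftArg c)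

theorem Gammat_eq_shiftedChebyshevT (c : ℝ) {n : ℕ} (hn : n ≠ 0) :
    Gammat c n = shiftedChebyshevT c n := by
  obtain ⟨m, rfl⟩ := Nat.exists_eq_succ_of_ne_zero hn
  simp [Gammat, shiftedChebyshevT]

theorem C_mul_shiftArg (hc : 0 < c) : C (2 * √c) * shiftArg c = X - C (1 + c) := by
  rw [shiftArg, ← mul_assoc, ← C_mul, mul_one_div_cancel (by positivity), C_1, one_mul]

theorem shiftedChebyshevT_zero (c : ℝ) : shiftedChebyshevT c 0 = 2 := by
  simp [shiftedChebyshevT, C_ofNat]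

theorem shiftedChebyshevT_one (hc : 0 < c) : shiftedChebyshevT c 1 = X - C (1 + c) := by
  rw [shiftedChebyshevT, pow_one, Nat.cast_one, Chebyshev.T_one, X_comp, C_mul_shiftArg hc]

theorem shiftedChebyshevT_add_two (hc : 0 < c) (n : ℕ) :
    shiftedChebyshevT c (n + 2) =
      (X - C (1 + c)) * shiftedChebyshevT c (n + 1) - C c * shiftedChebyshevT c n := by
  have hC : C c = C √c ^ 2 := by rw [← map_pow, sq_sqrt hc.le]
  rw [← C_mul_shiftArg hc, hC]
  simp only [shiftedChebyshevT, Nat.cast_add, Nat.cast_ofNat, Nat.cast_one, Chebyshev.T_add_two,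
    sub_comp, mul_comp, ofNat_comp, X_comp, map_mul, map_pow, map_ofNat]
  ring

theorem eval_param_shiftedChebyshevT (hc : 0 < c) (n : ℕ) (θ : ℝ) :
    (shiftedChebyshevT c n).eval (param c θ) = 2 * √c ^ n * cos (n * θ) := by
  have harg : (shiftArg c).eval (param c θ) = cos θ := by
    simp only [shiftArg, param, eval_mul, eval_C, eval_sub, eval_X]
    field_simp
    ring
  simp [shiftedChebyshevT, eval_comp, harg]

theorem integral_id_mul_shiftedChebyshevT (hc : 0 < c) (n : ℕ) :
    ∫ x, x * (shiftedChebyshevT c n).eval x ∂MarchenkoPastur c =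
      if n = 0 then 2 * c else if n = 2 then -c ^ 2 else 0 := by
  rw [integral_id_mul hc (shiftedChebyshevT c n).continuous]
  simp_rw [eval_param_shiftedChebyshevT hc, mul_left_comm (sin _ ^ 2), mul_comm (sin _ ^ 2)]
  rw [intervalIntegral.integral_const_mul, integral_cos_nat_mul_mul_sin_sq]
  have := pi_pos
  split_ifs with h0 h2
  · subst h0; field_simp
  · subst h2; rw [sq_sqrt hc.le]; field_simp; ring
  · simp

theorem integral_shiftedChebyshevT_add_two (hc : 0 < c) (n : ℕ) :
    ∫ x, (shiftedChebyshevT c (n + 2)).eval x ∂MarchenkoPastur c =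
      ∫ x, x * (shiftedChebyshevT c (n + 1)).eval x ∂MarchenkoPastur c
        - (1 + c) * ∫ x, (shiftedChebyshevT c (n + 1)).eval x ∂MarchenkoPastur c
        - c * ∫ x, (shiftedChebyshevT c n).eval x ∂MarchenkoPastur c := by
  have hint : ∀ k, Integrable (fun x => (shiftedChebyshevT c k).eval x) (MarchenkoPastur c) :=
    fun k => integrable hc (Polynomial.continuous _)
  have hint_id : Integrable (fun x => x * (shiftedChebyshevT c (n + 1)).eval x)
      (MarchenkoPastur c) :=
    integrable hc (continuous_id.mul (Polynomial.continuous _))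
  simp only [shiftedChebyshevT_add_two hc, eval_sub, eval_mul, eval_X, eval_C, sub_mul]
  rw [integral_sub ?_ ((hint _).const_mul _), integral_sub hint_id ((hint _).const_mul _),
    integral_const_mul, integral_const_mul]
  exact hint_id.sub ((hint _).const_mul _)

theorem integral_shiftedChebyshevT_zero (hc : 0 < c) :
    ∫ x, (shiftedChebyshevT c 0).eval x ∂MarchenkoPastur c = 2 := by
  have := isProbabilityMeasure hc
  simp [shiftedChebyshevT_zero]

theorem integral_shiftedChebyshevT_one (hc : 0 < c) :
    ∫ x, (shiftedChebyshevT c 1).eval x ∂MarchenkoPastur c = -1 := by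
  have := isProbabilityMeasure hc
  have hmean := integral_id_mul_shiftedChebyshevT hc 0
  simp only [shiftedChebyshevT_zero, eval_ofNat, if_true, integral_mul_const] at hmean
  rw [shiftedChebyshevT_one hc]
  simp only [eval_sub, eval_X, eval_C]
  rw [integral_sub (integrable hc continuous_id') (integrable_const _), integral_const,
    probReal_univ, one_smul]
  linarith

theorem integral_shiftedChebyshevT_add_two_eq (hc : 0 < c) (n : ℕ) :
    ∫ x, (shiftedChebyshevT c (n + 2)).eval x ∂MarchenkoPastur c = (-1) ^ n * (1 - c) := by
  induction n using Nat.twoStepInduction with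
  | zero =>
    rw [integral_shiftedChebyshevT_add_two hc, integral_id_mul_shiftedChebyshevT hc,
      integral_shiftedChebyshevT_one hc, integral_shiftedChebyshevT_zero hc]
    norm_num
    ring
  | one =>
    rw [integral_shiftedChebyshevT_add_two hc, integral_id_mul_shiftedChebyshevT hc,
      integral_shiftedChebyshevT_add_two hc, integral_id_mul_shiftedChebyshevT hc,
      integral_shiftedChebyshevT_one hc, integral_shiftedChebyshevT_zero hc]
    norm_num
    ring
  | more n ih₀ ih₁ =>
    rw [integral_shiftedChebyshevT_add_two hc, integral_id_mul_shiftedChebyshevT hc, ih₁, ih₀,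
      if_neg (by omega), if_neg (by omega)]
    ring

end MarchenkoPastur

theorem stmt2 (c : ℝ) (hc : 0 < c) :
    (∀ n : ℕ, 2 ≤ n →
      ∫ x, (Gammat c n).eval x ∂(MarchenkoPastur c) = (-1 : ℝ) ^ n * (1 - c)) ∧
    (∀ n : ℕ,
      ∫ x, ((Gammat c n).eval x + dcoef c n) ∂(MarchenkoPastur c) = 0) := by
  have := MarchenkoPastur.isProbabilityMeasure hc
  have hGammat : ∀ n, 2 ≤ n →
      ∫ x, (Gammat c n).eval x ∂(MarchenkoPastur c) = (-1 : ℝ) ^ n * (1 - c) := by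
    intro n hn
    obtain ⟨k, rfl⟩ := Nat.exists_eq_add_of_le' hn
    rw [MarchenkoPastur.Gammat_eq_shiftedChebyshevT c (by omega),
      MarchenkoPastur.integral_shiftedChebyshevT_add_two_eq hc]
    ring
  refine ⟨hGammat, fun n => ?_⟩
  rw [integral_add (MarchenkoPastur.integrable hc (Gammat c n).continuous) (integrable_const _),
    integral_const, probReal_univ, one_smul]
  match n with
  | 0 => simp [Gammat, dcoef]
  | 1 =>
    rw [MarchenkoPastur.Gammat_eq_shiftedChebyshevT c one_ne_zero,
      MarchenkoPastur.integral_shiftedChebyshevT_one hc, dcoef]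
    ring
  | k + 2 =>
    rw [hGammat (k + 2) le_add_self, dcoef]
    ring
end

section
/- Fix a real number c > 0. Let g_{n,k} (0 ≤ k ≤ n) be the unique real numbers with x^n = Σ_{k=0}^n g_{n,k}·Γ̃_k(x), extended by g_{n,k} = 0 for k > n, and let p_{n,0} be defined by x^n = Σ_{k=0}^n p_{n,k}·Π_k(x). Set G_k(z) = Σ_{n≥0} g_{n,k} z^n and P_0(z) = Σ_{n≥0} p_{n,0} z^n in ℝ[[z]]. Then for every n ≥ 0 one has the formal power series identity c^n·G_n(z) = (P_0(z) − 1)^n · G_0(z). -/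
open Polynomial

/-- The shifted Chebyshev polynomials of the second kind:
`Π_0 = 1`, `Π_n(x) = c^{n/2} U_n(u) + c^{(n-1)/2} U_{n-1}(u)` with
`u = (x-(1+c))/(2√c)`, for `n ≥ 1`. -/
noncomputable def PiP (c : ℝ) : ℕ → Polynomial ℝ
  | 0 => 1
  | n + 1 =>
      C (Real.sqrt c ^ (n + 1)) *
        (Polynomial.Chebyshev.U ℝ ((n : ℤ) + 1)).comp (shiftArg c) +
      C (Real.sqrt c ^ n) * (Polynomial.Chebyshev.U ℝ (n : ℤ)).comp (shiftArg c)

open scoped PowerSeries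

/-!
Let `γ_k` and `π_k` be the coordinate functionals of the bases `Γ̃` and `Π` of `ℝ[X]`, so that
`g_{n,k} = γ_k(xⁿ)` and `p_{n,0} = π_0(xⁿ)`: the series `G_k` and `P_0` are the moment series
`M(φ) = Σ φ(xⁿ) zⁿ` of these functionals, and `M(φ) = φ(1) + z M(φ ∘ x·)`.

Both bases are built from `V_n = c^{n/2} U_n(u)` (`shiftedU`): `Γ̃_{n+2} = V_{n+2} - c V_n` and
`Π_{n+1} = V_{n+1} + V_n`, while `x V_n = Π_{n+1} + c Π_n`. Transposing the three-term recurrence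
of `Γ̃` gives `γ_{k+1} ∘ x· = γ_k + (1+c) γ_{k+1} + c γ_{k+2}`, `γ_0 ∘ x· = (1+c) γ_0 + 2c γ_1` and
`π_0 ∘ x· = c γ_0 - c² γ_2`. So `G_{k+1} = z (G_k + (1+c) G_{k+1} + c G_{k+2})` and
`P_0 = 1 + z (c G_0 - c² G_2)`. The differences `E_k = c G_{k+1} - (P_0 - 1) G_k` then obey the
homogeneous recurrence, so the ideal they generate lies inside `z` times itself and vanishes.
-/

section DegreeBasis

variable {K : Type*} [Field K] {Q : ℕ → K[X]} (hQ : ∀ n, (Q n).degree = n)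

noncomputable def basisOfDegreeEq : Module.Basis ℕ K K[X] :=
  (⟨Q, hQ⟩ : Sequence K).basis fun n =>
    (leadingCoeff_ne_zero.2 ((⟨Q, hQ⟩ : Sequence K).ne_zero n)).isUnit

theorem basisOfDegreeEq_apply (n : ℕ) : basisOfDegreeEq hQ n = Q n :=
  Sequence.basis_eq_self _ _ n

theorem coord_basisOfDegreeEq (k n : ℕ) :
    (basisOfDegreeEq hQ).coord k (Q n) = if n = k then 1 else 0 := by
  rw [← basisOfDegreeEq_apply hQ, Module.Basis.coord_apply, Module.Basis.repr_self,
    Finsupp.single_apply]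

theorem coord_basisOfDegreeEq_sum (a : ℕ → K) (N k : ℕ) :
    (basisOfDegreeEq hQ).coord k (∑ i ∈ Finset.range N, C (a i) * Q i) =
      if k < N then a k else 0 := by
  simp only [map_sum, C_mul', map_smul, coord_basisOfDegreeEq, smul_eq_mul, mul_ite, mul_one,
    mul_zero, Finset.sum_ite_eq', Finset.mem_range]

end DegreeBasis

section MomentSeries

variable {R : Type*} [CommRing R]

noncomputable def momentSeries : Module.Dual R R[X] →ₗ[R] R⟦X⟧ where
  toFun φ := PowerSeries.mk fun m => φ (X ^ m)
  map_add' φ ψ := by ext; simp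
  map_smul' a φ := by ext; simp

theorem coeff_momentSeries (φ : Module.Dual R R[X]) (m : ℕ) :
    PowerSeries.coeff m (momentSeries φ) = φ (X ^ m) :=
  PowerSeries.coeff_mk m fun m => φ (X ^ m)

theorem momentSeries_eq_C_add_X_mul (φ : Module.Dual R R[X]) :
    momentSeries φ =
      PowerSeries.C (φ 1) + PowerSeries.X * momentSeries (φ ∘ₗ LinearMap.mulLeft R X) := by
  ext (_ | m) <;> simp [coeff_momentSeries, PowerSeries.coeff_succ_X_mul, pow_succ']

end MomentSeries

namespace PowerSeries

variable {R : Type*} [CommRing R]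

theorem eq_bot_of_le_span_X_mul {I : Ideal R⟦X⟧} (h : I ≤ Ideal.span {X} * I) : I = ⊥ := by
  have hpow (n : ℕ) : I ≤ Ideal.span {X} ^ n := by
    induction n with
    | zero => simp
    | succ n ih => exact h.trans (by rw [pow_succ']; exact Ideal.mul_mono_right ih)
  refine eq_bot_iff.2 fun f hf => (Submodule.mem_bot _).2 (ext fun m => ?_)
  have hdvd : X ^ (m + 1) ∣ f := by
    simpa [Ideal.span_singleton_pow, Ideal.mem_span_singleton] using hpow (m + 1) hf
  simpa using X_pow_dvd_iff.1 hdvd m m.lt_succ_self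

theorem eq_zero_of_recurrence (E : ℕ → R⟦X⟧) (b c : R⟦X⟧)
    (hE₀ : E 0 = X * (b * E 0 + 2 * c * E 1))
    (hE : ∀ k, E (k + 1) = X * (E k + b * E (k + 1) + c * E (k + 2))) : E = 0 := by
  suffices Ideal.span (Set.range E) = ⊥ from
    funext fun k => (Ideal.span_eq_bot.1 this) _ ⟨k, rfl⟩
  refine eq_bot_of_le_span_X_mul (Ideal.span_le.2 ?_)
  rintro _ ⟨k, rfl⟩
  have mem (j : ℕ) : E j ∈ Ideal.span (Set.range E) := Ideal.subset_span ⟨j, rfl⟩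
  cases k with
  | zero =>
    rw [hE₀]
    exact Ideal.mul_mem_mul (Ideal.mem_span_singleton_self X)
      (Ideal.add_mem _ (Ideal.mul_mem_left _ _ (mem 0)) (Ideal.mul_mem_left _ _ (mem 1)))
  | succ k =>
    rw [hE]
    exact Ideal.mul_mem_mul (Ideal.mem_span_singleton_self X) (Ideal.add_mem _
      (Ideal.add_mem _ (mem k) (Ideal.mul_mem_left _ _ (mem (k + 1))))
      (Ideal.mul_mem_left _ _ (mem (k + 2))))

theorem pow_mul_eq_of_recurrence (G : ℕ → R⟦X⟧) (P b c : R⟦X⟧)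
    (hG₀ : G 0 = 1 + X * (b * G 0 + 2 * c * G 1))
    (hG : ∀ k, G (k + 1) = X * (G k + b * G (k + 1) + c * G (k + 2)))
    (hP : P = 1 + X * (c * G 0 - c ^ 2 * G 2)) (n : ℕ) :
    c ^ n * G n = (P - 1) ^ n * G 0 := by
  have hE : (fun k => c * G (k + 1) - (P - 1) * G k) = 0 := by
    refine eq_zero_of_recurrence _ b c ?_ fun k => ?_
    · linear_combination c * hG 0 - (P - 1) * hG₀ - hP
    · linear_combination c * hG (k + 1) - (P - 1) * hG k
  induction n with
  | zero => simp
  | succ n ih =>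
    have hstep : c * G (n + 1) = (P - 1) * G n := sub_eq_zero.1 (congrFun hE n)
    linear_combination c ^ n * hstep + (P - 1) * ih

end PowerSeries

section ShiftedChebyshev

variable {c : ℝ}

noncomputable def shiftedU (c : ℝ) (n : ℕ) : ℝ[X] :=
  C (Real.sqrt c ^ n) * (Chebyshev.U ℝ n).comp (shiftArg c)

theorem C_two_sqrt_mul_shiftArg (hc : 0 < c) :
    C (2 * Real.sqrt c) * shiftArg c = X - C (1 + c) := by
  have : 2 * Real.sqrt c ≠ 0 := by positivity
  rw [shiftArg, ← mul_assoc, ← C_mul, mul_one_div_cancel this, C_1, one_mul]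

theorem shiftedU_zero : shiftedU c 0 = 1 := by simp [shiftedU]

theorem Gammat_zero : Gammat c 0 = 1 := rfl

theorem Gammat_one : Gammat c 1 = shiftedU c 1 := by
  simp only [Gammat, shiftedU, zero_add, pow_one, CharP.cast_eq_zero, Nat.cast_one,
    Chebyshev.T_one, Chebyshev.U_one, X_comp, mul_comp, ofNat_comp, map_mul, map_ofNat]
  ring

theorem shiftedU_one (hc : 0 < c) : shiftedU c 1 = X - C (1 + c) := by
  rw [← Gammat_one, ← C_two_sqrt_mul_shiftArg hc]
  simp [Gammat]

theorem shiftedU_add_two (hc : 0 < c) (n : ℕ) :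
    shiftedU c (n + 2) = (X - C (1 + c)) * shiftedU c (n + 1) - C c * shiftedU c n := by
  have hsq : C c = C (Real.sqrt c) ^ 2 := by rw [← map_pow, Real.sq_sqrt hc.le]
  rw [← C_two_sqrt_mul_shiftArg hc, hsq]
  simp only [shiftedU, Nat.cast_add, Nat.cast_ofNat, Nat.cast_one, Chebyshev.U_add_two, sub_comp,
    mul_comp, X_comp, map_mul, map_pow, ofNat_comp, map_ofNat]
  ring

theorem X_mul_shiftedU_succ (hc : 0 < c) (n : ℕ) :
    X * shiftedU c (n + 1) =
      shiftedU c (n + 2) + C (1 + c) * shiftedU c (n + 1) + C c * shiftedU c n := by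
  rw [shiftedU_add_two hc]
  ring

theorem Gammat_add_two (hc : 0 < c) (n : ℕ) :
    Gammat c (n + 2) = shiftedU c (n + 2) - C c * shiftedU c n := by
  have hsq : C c = C (Real.sqrt c) ^ 2 := by rw [← map_pow, Real.sq_sqrt hc.le]
  have hT := congrArg (·.comp (shiftArg c)) (Chebyshev.two_mul_T_eq_U_sub_U ℝ n)
  simp only [mul_comp, sub_comp, ofNat_comp] at hT
  simp only [Gammat, shiftedU, hsq, Nat.cast_add, Nat.cast_ofNat, Nat.cast_one, map_mul, map_pow,
    add_assoc, one_add_one_eq_two, map_ofNat]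
  linear_combination C (Real.sqrt c) ^ (n + 2) * hT

theorem PiP_succ (n : ℕ) : PiP c (n + 1) = shiftedU c (n + 1) + shiftedU c n := by
  simp [PiP, shiftedU]

theorem X_mul_shiftedU (hc : 0 < c) (n : ℕ) :
    X * shiftedU c n = PiP c (n + 1) + C c * PiP c n := by
  cases n with
  | zero =>
    rw [PiP_succ, shiftedU_zero, shiftedU_one hc, map_add, map_one]
    simp only [PiP]
    ring
  | succ n =>
    rw [PiP_succ, PiP_succ, shiftedU_add_two hc, map_add, map_one]
    ring

theorem X_mul_Gammat_zero (hc : 0 < c) :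
    X * Gammat c 0 = Gammat c 1 + C (1 + c) * Gammat c 0 := by
  rw [Gammat_zero, Gammat_one, shiftedU_one hc]
  ring

theorem X_mul_Gammat_one (hc : 0 < c) :
    X * Gammat c 1 = Gammat c 2 + C (1 + c) * Gammat c 1 + C (2 * c) * Gammat c 0 := by
  rw [Gammat_zero, Gammat_one, Gammat_add_two hc, X_mul_shiftedU_succ hc, shiftedU_zero, C_mul,
    map_ofNat]
  ring

theorem X_mul_Gammat_add_two (hc : 0 < c) (n : ℕ) :
    X * Gammat c (n + 2) =
      Gammat c (n + 3) + C (1 + c) * Gammat c (n + 2) + C c * Gammat c (n + 1) := by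
  rw [Gammat_add_two hc, Gammat_add_two hc, mul_sub, mul_left_comm, X_mul_shiftedU_succ hc]
  cases n with
  | zero =>
    rw [Gammat_one, shiftedU_zero, shiftedU_one hc]
    ring
  | succ n =>
    rw [Gammat_add_two hc, X_mul_shiftedU_succ hc]
    ring

theorem degree_shiftArg (hc : 0 < c) : (shiftArg c).degree = 1 := by
  rw [shiftArg, degree_C_mul (by positivity), degree_X_sub_C]

theorem degree_comp_shiftArg (hc : 0 < c) (p : ℝ[X]) :
    (p.comp (shiftArg c)).degree = p.degree := by
  rw [degree_comp (by rw [degree_shiftArg hc]; exact zero_lt_one), degree_shiftArg hc, mul_one]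

theorem degree_Gammat (hc : 0 < c) (n : ℕ) : (Gammat c n).degree = n := by
  cases n with
  | zero => simp [Gammat]
  | succ n =>
    rw [Gammat, degree_C_mul (by positivity), degree_comp_shiftArg hc, Chebyshev.degree_T]
    norm_cast

theorem degree_shiftedU (hc : 0 < c) (n : ℕ) : (shiftedU c n).degree = n := by
  rw [shiftedU, degree_C_mul (by positivity), degree_comp_shiftArg hc,
    Chebyshev.degree_U_natCast]

theorem degree_PiP (hc : 0 < c) (n : ℕ) : (PiP c n).degree = n := by
  cases n with
  | zero => simp [PiP]
  | succ n =>
    rw [PiP_succ, degree_add_eq_left_of_degree_lt, degree_shiftedU hc]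
    rw [degree_shiftedU hc, degree_shiftedU hc]
    exact_mod_cast n.lt_succ_self

noncomputable def gammatBasis (hc : 0 < c) : Module.Basis ℕ ℝ ℝ[X] :=
  basisOfDegreeEq (degree_Gammat hc)

noncomputable def piPBasis (hc : 0 < c) : Module.Basis ℕ ℝ ℝ[X] :=
  basisOfDegreeEq (degree_PiP hc)

theorem gammatBasis_coord_zero_comp_mulLeft (hc : 0 < c) :
    (gammatBasis hc).coord 0 ∘ₗ LinearMap.mulLeft ℝ X =
      (1 + c) • (gammatBasis hc).coord 0 + (2 * c) • (gammatBasis hc).coord 1 := by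
  refine (gammatBasis hc).ext fun j => ?_
  rcases j with _ | _ | j <;>
  simp only [gammatBasis, basisOfDegreeEq_apply, LinearMap.comp_apply, LinearMap.mulLeft_apply,
    LinearMap.add_apply, LinearMap.smul_apply, X_mul_Gammat_zero hc, X_mul_Gammat_one hc,
    X_mul_Gammat_add_two hc, LinearMap.map_add, C_mul', LinearMap.map_smul,
    coord_basisOfDegreeEq, smul_eq_mul] <;>
  split_ifs <;> first | ring1 | omega | contradiction

theorem gammatBasis_coord_succ_comp_mulLeft (hc : 0 < c) (k : ℕ) :
    (gammatBasis hc).coord (k + 1) ∘ₗ LinearMap.mulLeft ℝ X =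
      (gammatBasis hc).coord k + (1 + c) • (gammatBasis hc).coord (k + 1) +
        c • (gammatBasis hc).coord (k + 2) := by
  refine (gammatBasis hc).ext fun j => ?_
  rcases j with _ | _ | j <;>
  simp only [gammatBasis, basisOfDegreeEq_apply, LinearMap.comp_apply, LinearMap.mulLeft_apply,
    LinearMap.add_apply, LinearMap.smul_apply, X_mul_Gammat_zero hc, X_mul_Gammat_one hc,
    X_mul_Gammat_add_two hc, LinearMap.map_add, C_mul', LinearMap.map_smul,
    coord_basisOfDegreeEq, smul_eq_mul] <;>
  split_ifs <;> first | ring1 | omega | contradiction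

theorem piPBasis_coord_zero_X_mul_shiftedU (hc : 0 < c) (n : ℕ) :
    (piPBasis hc).coord 0 (X * shiftedU c n) = if n = 0 then c else 0 := by
  simp only [piPBasis, X_mul_shiftedU hc, LinearMap.map_add, C_mul', LinearMap.map_smul,
    coord_basisOfDegreeEq, smul_eq_mul]
  split_ifs <;> first | ring1 | omega | contradiction

theorem piPBasis_coord_zero_comp_mulLeft (hc : 0 < c) :
    (piPBasis hc).coord 0 ∘ₗ LinearMap.mulLeft ℝ X =
      c • (gammatBasis hc).coord 0 - c ^ 2 • (gammatBasis hc).coord 2 := by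
  refine (gammatBasis hc).ext fun j => ?_
  rcases j with _ | _ | j <;>
  simp only [gammatBasis, basisOfDegreeEq_apply, LinearMap.comp_apply, LinearMap.mulLeft_apply,
    LinearMap.sub_apply, LinearMap.smul_apply, coord_basisOfDegreeEq, smul_eq_mul]
  · simpa [shiftedU_zero, Gammat_zero] using piPBasis_coord_zero_X_mul_shiftedU hc 0
  · simpa [Gammat_one] using piPBasis_coord_zero_X_mul_shiftedU hc 1
  · rw [Gammat_add_two hc, mul_sub, mul_left_comm, LinearMap.map_sub, C_mul', LinearMap.map_smul,
      piPBasis_coord_zero_X_mul_shiftedU hc, piPBasis_coord_zero_X_mul_shiftedU hc]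
    split_ifs <;> first | ring1 | omega

theorem momentSeries_gammatBasis_coord_zero (hc : 0 < c) :
    momentSeries ((gammatBasis hc).coord 0) =
      1 + PowerSeries.X * (PowerSeries.C (1 + c) * momentSeries ((gammatBasis hc).coord 0) +
        2 * PowerSeries.C c * momentSeries ((gammatBasis hc).coord 1)) := by
  refine (momentSeries_eq_C_add_X_mul _).trans ?_
  rw [gammatBasis_coord_zero_comp_mulLeft hc, map_add, map_smul, map_smul,
    PowerSeries.smul_eq_C_mul, PowerSeries.smul_eq_C_mul, ← Gammat_zero, gammatBasis,
    coord_basisOfDegreeEq, if_pos rfl, map_one, map_mul, map_ofNat]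

theorem momentSeries_gammatBasis_coord_succ (hc : 0 < c) (k : ℕ) :
    momentSeries ((gammatBasis hc).coord (k + 1)) =
      PowerSeries.X * (momentSeries ((gammatBasis hc).coord k) +
        PowerSeries.C (1 + c) * momentSeries ((gammatBasis hc).coord (k + 1)) +
        PowerSeries.C c * momentSeries ((gammatBasis hc).coord (k + 2))) := by
  refine (momentSeries_eq_C_add_X_mul _).trans ?_
  rw [gammatBasis_coord_succ_comp_mulLeft hc, map_add, map_add, map_smul, map_smul,
    PowerSeries.smul_eq_C_mul, PowerSeries.smul_eq_C_mul, ← Gammat_zero, gammatBasis,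
    coord_basisOfDegreeEq, if_neg k.succ_ne_zero.symm, map_zero, zero_add]

theorem momentSeries_piPBasis_coord_zero (hc : 0 < c) :
    momentSeries ((piPBasis hc).coord 0) =
      1 + PowerSeries.X * (PowerSeries.C c * momentSeries ((gammatBasis hc).coord 0) -
        PowerSeries.C c ^ 2 * momentSeries ((gammatBasis hc).coord 2)) := by
  have hPiP_zero : PiP c 0 = 1 := rfl
  refine (momentSeries_eq_C_add_X_mul _).trans ?_
  rw [piPBasis_coord_zero_comp_mulLeft hc, map_sub, map_smul, map_smul,
    PowerSeries.smul_eq_C_mul, PowerSeries.smul_eq_C_mul, ← hPiP_zero, piPBasis,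
    coord_basisOfDegreeEq, if_pos rfl, map_one, map_pow]

end ShiftedChebyshev

theorem stmt7 (c : ℝ) (hc : 0 < c) (g p : ℕ → ℕ → ℝ)
    (hgexp : ∀ n : ℕ,
      (X ^ n : Polynomial ℝ) = ∑ k ∈ Finset.range (n + 1), C (g n k) * Gammat c k)
    (hgzero : ∀ n k : ℕ, n < k → g n k = 0)
    (hpexp : ∀ n : ℕ,
      (X ^ n : Polynomial ℝ) = ∑ k ∈ Finset.range (n + 1), C (p n k) * PiP c k) :
    ∀ n : ℕ,
      PowerSeries.C (R := ℝ) (c ^ n) * PowerSeries.mk (fun m => g m n) =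
        (PowerSeries.mk (fun m => p m 0) - 1) ^ n * PowerSeries.mk (fun m => g m 0) := by
  have hG (k : ℕ) :
      PowerSeries.mk (fun m => g m k) = momentSeries ((gammatBasis hc).coord k) := by
    ext m
    rw [PowerSeries.coeff_mk, coeff_momentSeries, hgexp m, gammatBasis, coord_basisOfDegreeEq_sum]
    split_ifs with hk
    · rfl
    · exact hgzero m k (by omega)
  have hP : PowerSeries.mk (fun m => p m 0) = momentSeries ((piPBasis hc).coord 0) := by
    ext m
    rw [PowerSeries.coeff_mk, coeff_momentSeries, hpexp m, piPBasis, coord_basisOfDegreeEq_sum,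
      if_pos m.succ_pos]
  intro n
  rw [hG, hG, hP, map_pow]
  exact PowerSeries.pow_mul_eq_of_recurrence (fun k => momentSeries ((gammatBasis hc).coord k))
    _ (PowerSeries.C (1 + c)) (PowerSeries.C c) (momentSeries_gammatBasis_coord_zero hc)
    (momentSeries_gammatBasis_coord_succ hc) (momentSeries_piPBasis_coord_zero hc) n
end

section
/- Let π be a non-crossing permutation of [m], let B be an orbit of π and B̄ an orbit of the Kreweras complement π^c = γ_m π⁻¹ such that B ∩ B̄ ≠ ∅. Then B ∩ B̄ contains exactly one element. -/
/-- The number of orbits of a permutation of `Fin n` (fixed points counted):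
the number of nontrivial cycles plus the number of fixed points. -/
def numOrbits {n : ℕ} (σ : Equiv.Perm (Fin n)) : ℕ :=
  σ.cycleType.card + (Finset.univ.filter fun x => σ x = x).card

/-- A permutation `π` of `[m]` is non-crossing if `#(π) + #(γ_m π⁻¹) = m + 1`,
where `γ_m` is the cycle `(1,2,…,m)` (here `finRotate m`). -/
def IsNC {m : ℕ} (π : Equiv.Perm (Fin m)) : Prop :=
  numOrbits π + numOrbits (finRotate m * π⁻¹) = m + 1

/-- `B` is an orbit of the permutation `σ`. -/
def IsBlock {m : ℕ} (σ : Equiv.Perm (Fin m)) (B : Set (Fin m)) : Prop :=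
  ∃ x, B = {y | σ.SameCycle x y}

/-!
The space of `σ`-invariant functions `Fin m → ℚ` has dimension `#(σ)`. Since `π^c π = γ_m`, a
function invariant under both `π` and `π^c` is invariant under `γ_m`, hence constant. So the two
invariant spaces meet in dimension at most `1`, and the non-crossing condition
`#(π) + #(π^c) = m + 1` forces them to span all functions. Writing the indicator `δ_y` of a point
`y ∈ B ∩ B̄` as `f + g` with `f` `π`-invariant and `g` `π^c`-invariant, any `x ∈ B ∩ B̄` satisfies
`δ_y x = f x + g x = f y + g y = 1`, so `x = y`.
-/

open Finset Module

namespace Equiv.Perm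

section invariantFunctions

variable {α : Type*} (K : Type*) [Field K]

def invariantFunctions (σ : Perm α) : Submodule K (α → K) where
  carrier := {f | ∀ x, f (σ x) = f x}
  add_mem' hf hg x := by simp [hf x, hg x]
  zero_mem' _ := rfl
  smul_mem' c f hf x := by simp [hf x]

variable {K}

theorem invariantFunctions_inf_le_mul (σ τ : Perm α) :
    invariantFunctions K σ ⊓ invariantFunctions K τ ≤ invariantFunctions K (σ * τ) :=
  fun f ⟨hσ, hτ⟩ x => by rw [mul_apply, hσ, hτ]

theorem SameCycle.apply_eq_of_mem_invariantFunctions [Finite α] {σ : Perm α} {f : α → K}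
    (hf : f ∈ invariantFunctions K σ) {x y : α} (h : σ.SameCycle x y) : f x = f y := by
  obtain ⟨n, -, rfl⟩ := h.exists_pow_eq'
  clear h
  induction n with
  | zero => rfl
  | succ n ih => rw [ih, pow_succ', mul_apply, hf]

theorem eq_of_sameCycle_of_invariantFunctions_sup_eq_top [Finite α]
    {σ τ : Perm α} (hsup : invariantFunctions K σ ⊔ invariantFunctions K τ = ⊤) {x y : α}
    (hσ : σ.SameCycle x y) (hτ : τ.SameCycle x y) : x = y := by
  classical
  have hmem : (Pi.single y 1 : α → K) ∈ invariantFunctions K σ ⊔ invariantFunctions K τ :=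
    hsup ▸ Submodule.mem_top
  obtain ⟨f, hf, g, hg, hfg⟩ := Submodule.mem_sup.1 hmem
  have hvalue : (Pi.single y 1 : α → K) x = 1 := by
    rw [← hfg, Pi.add_apply, hσ.apply_eq_of_mem_invariantFunctions hf,
      hτ.apply_eq_of_mem_invariantFunctions hg, ← Pi.add_apply, hfg, Pi.single_eq_same]
  by_contra hxy
  rw [Pi.single_eq_of_ne hxy] at hvalue
  exact zero_ne_one hvalue

end invariantFunctions

section cycleKey

variable {α : Type*} [Fintype α] [DecidableEq α]

/-- Keys the orbits of `σ` injectively, so that the image of `cycleKey σ` counts them. -/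
def cycleKey (σ : Perm α) (x : α) : α ⊕ Perm α :=
  if σ x = x then .inl x else .inr (σ.cycleOf x)

theorem cycleKey_eq_cycleKey_iff {σ : Perm α} {x y : α} :
    σ.cycleKey x = σ.cycleKey y ↔ σ.SameCycle x y := by
  by_cases hx : σ x = x <;> by_cases hy : σ y = y
  · simp only [cycleKey, hx, hy, if_true, Sum.inl.injEq]
    exact ⟨fun h => h ▸ SameCycle.refl σ x, fun h => h.eq_of_left hx⟩
  · simp only [cycleKey, hx, hy, if_true, if_false, reduceCtorEq, false_iff]
    exact fun h => hy (h.apply_eq_self_iff.1 hx)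
  · simp only [cycleKey, hx, hy, if_true, if_false, reduceCtorEq, false_iff]
    exact fun h => hx (h.apply_eq_self_iff.2 hy)
  · simp only [cycleKey, hx, hy, if_false, Sum.inr.injEq]
    exact (sameCycle_iff_cycleOf_eq_of_mem_support (mem_support.2 hx) (mem_support.2 hy)).symm

theorem image_cycleKey (σ : Perm α) :
    univ.image σ.cycleKey = (univ.filter fun x => σ x = x).disjSum σ.cycleFactorsFinset := by
  ext (x | c)
  · simp only [mem_image, mem_univ, true_and, inl_mem_disjSum, mem_filter, cycleKey]
    constructor
    · rintro ⟨y, hy⟩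
      split_ifs at hy with h
      · cases hy; exact h
    · exact fun hx => ⟨x, by simp [hx]⟩
  · simp only [mem_image, mem_univ, true_and, inr_mem_disjSum, cycleKey]
    constructor
    · rintro ⟨y, hy⟩
      split_ifs at hy with h
      cases hy
      exact cycleOf_mem_cycleFactorsFinset_iff.2 (mem_support.2 h)
    · intro hc
      obtain ⟨y, hy⟩ := (mem_cycleFactorsFinset_iff.1 hc).1.nonempty_support
      refine ⟨y, ?_⟩
      rw [if_neg (mem_support.1 (mem_cycleFactorsFinset_support_le hc hy)), cycle_is_cycleOf hy hc]

variable (K : Type*) [Field K]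

theorem finrank_invariantFunctions (σ : Perm α) :
    finrank K (invariantFunctions K σ) = #(univ.image σ.cycleKey) := by
  let p : α → univ.image σ.cycleKey := fun x =>
    ⟨σ.cycleKey x, mem_image_of_mem _ (mem_univ x)⟩
  have hp : Function.Surjective p := by
    rintro ⟨_, hk⟩
    obtain ⟨x, -, rfl⟩ := mem_image.1 hk
    exact ⟨x, rfl⟩
  have hp_eq {x y : α} : p x = p y ↔ σ.SameCycle x y :=
    Subtype.ext_iff.trans cycleKey_eq_cycleKey_iff
  have hrange : LinearMap.range (LinearMap.funLeft K K p) = invariantFunctions K σ := by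
    ext f
    constructor
    · rintro ⟨g, rfl⟩ x
      exact congrArg g (hp_eq.2 (sameCycle_apply_right.2 (SameCycle.refl σ x))).symm
    · intro hf
      refine ⟨Function.extend p f 0, funext fun x => ?_⟩
      exact Function.FactorsThrough.extend_apply
        (fun x y h => SameCycle.apply_eq_of_mem_invariantFunctions hf (hp_eq.1 h)) 0 x
  have hinj := LinearMap.funLeft_injective_of_surjective K K p hp
  rw [← hrange, LinearMap.finrank_range_of_inj hinj, finrank_fintype_fun_eq_card, Fintype.card_coe]

variable {K}

theorem finrank_invariantFunctions_le_one {σ : Perm α} (h : ∀ x y, σ.SameCycle x y) :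
    finrank K (invariantFunctions K σ) ≤ 1 := by
  rw [finrank_invariantFunctions, card_le_one]
  simp only [mem_image, mem_univ, true_and]
  rintro _ ⟨x, rfl⟩ _ ⟨y, rfl⟩
  exact cycleKey_eq_cycleKey_iff.2 (h x y)

end cycleKey

end Equiv.Perm

open Equiv Perm

theorem sameCycle_finRotate : ∀ {m : ℕ} (x y : Fin m), (finRotate m).SameCycle x y
  | 1, x, y => Subsingleton.elim x y ▸ SameCycle.refl _ x
  | _ + 2, x, y => isCycle_finRotate.sameCycle (by simp) (by simp)

theorem numOrbits_eq_finrank_invariantFunctions (K : Type*) [Field K] {n : ℕ}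
    (σ : Perm (Fin n)) :
    numOrbits σ = finrank K (invariantFunctions K σ) := by
  rw [finrank_invariantFunctions, image_cycleKey, card_disjSum, numOrbits, cycleType_def,
    Multiset.card_map, add_comm]
  rfl

theorem IsNC.invariantFunctions_sup_eq_top {m : ℕ} {π : Perm (Fin m)} (hπ : IsNC π)
    (K : Type*) [Field K] :
    invariantFunctions K π ⊔ invariantFunctions K (finRotate m * π⁻¹) = ⊤ := by
  set V := invariantFunctions K π
  set W := invariantFunctions K (finRotate m * π⁻¹)
  have hinf : V ⊓ W ≤ invariantFunctions K (finRotate m) := by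
    simpa [inf_comm] using invariantFunctions_inf_le_mul (K := K) (finRotate m * π⁻¹) π
  have hinf_le : finrank K (V ⊓ W : Submodule K _) ≤ 1 :=
    (Submodule.finrank_mono hinf).trans (finrank_invariantFunctions_le_one sameCycle_finRotate)
  have hsup_le := Submodule.finrank_le (V ⊔ W)
  have hdim := Submodule.finrank_sup_add_finrank_inf_eq V W
  have hnc : finrank K V + finrank K W = m + 1 := by
    rw [← numOrbits_eq_finrank_invariantFunctions, ← numOrbits_eq_finrank_invariantFunctions]
    exact hπ
  apply Submodule.eq_top_of_finrank_eq
  rw [finrank_fintype_fun_eq_card, Fintype.card_fin] at hsup_le ⊢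
  omega

theorem IsBlock.sameCycle {m : ℕ} {σ : Perm (Fin m)} {B : Set (Fin m)} (hB : IsBlock σ B)
    {x y : Fin m} (hx : x ∈ B) (hy : y ∈ B) : σ.SameCycle x y := by
  obtain ⟨b, rfl⟩ := hB
  exact hx.symm.trans hy

theorem stmt9 (m : ℕ) (π : Equiv.Perm (Fin m)) (hπ : IsNC π)
    (B Bbar : Set (Fin m)) (hB : IsBlock π B)
    (hBbar : IsBlock (finRotate m * π⁻¹) Bbar)
    (hne : (B ∩ Bbar).Nonempty) :
    ∃! x, x ∈ B ∩ Bbar := by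
  obtain ⟨x, hx⟩ := hne
  refine ⟨x, hx, fun y hy => ?_⟩
  exact eq_of_sameCycle_of_invariantFunctions_sup_eq_top (hπ.invariantFunctions_sup_eq_top ℚ)
    (hB.sameCycle hy.1 hx.1) (hBbar.sameCycle hy.2 hx.2)
end

section
/- Let b_1 < b_2 < ⋯ < b_k < c_1 < c_2 < ⋯ < c_l be distinct points, let D be the permutation with the single cycle (b_1, b_2, …, b_k, c_1, c_2, …, c_l), let 1 ≤ i_1 < i_2 < ⋯ < i_t ≤ k and l ≥ j_1 > j_2 > ⋯ > j_t ≥ 1. Then for all r ≠ s in {1,…,t}, the points b_{i_s} and c_{j_s} lie in the same cycle of the permutation (b_{i_r}, c_{j_r})·D (the transposition (b_{i_r}, c_{j_r}) composed with D). -/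
/-! If `σ = (x y) * τ`, then `σ` moves a point exactly as `τ` does whenever the
`τ`-image avoids `x` and `y`. Along the cycle `D`, the arc from `b_{i_s}` forward to
`c_{j_s}` (when `r < s`), or from `c_{j_s}` forward around to `b_{i_s}` (when `s < r`),
contains neither `b_{i_r}` nor `c_{j_r}`, so `(b_{i_r} c_{j_r}) * D` follows the same arc. -/

namespace Equiv.Perm

variable {α : Type*} [DecidableEq α]

theorem swap_mul_pow_apply_of_forall_ne {τ : Perm α} {x y a : α} {n : ℕ}
    (h : ∀ i < n, (τ ^ (i + 1)) a ≠ x ∧ (τ ^ (i + 1)) a ≠ y) :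
    ((swap x y * τ) ^ n) a = (τ ^ n) a := by
  induction n with
  | zero => rfl
  | succ n ih =>
    obtain ⟨hx, hy⟩ := h n n.lt_succ_self
    rw [pow_succ', mul_apply, ih fun i hi => h i (by omega), mul_apply, ← mul_apply τ,
      ← pow_succ', swap_apply_of_ne_of_ne hx hy]

end Equiv.Perm

namespace List

variable {α : Type*} [DecidableEq α]

theorem sameCycle_swap_mul_formPerm_getElem {L : List α} (hL : L.Nodup) {x y : α}
    {p q : ℕ} (hpq : p ≤ q) (hq : q < L.length)
    (h : ∀ (m : ℕ) (hm : m < L.length), p < m → m ≤ q → L[m] ≠ x ∧ L[m] ≠ y) :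
    (Equiv.swap x y * L.formPerm).SameCycle L[p] L[q] := by
  have hpow : ∀ (i : ℕ) (hi : i ≤ q - p), (L.formPerm ^ i) L[p] = L[p + i]'(by omega) :=
    fun i hi => by
      simp only [formPerm_pow_apply_getElem L hL, Nat.mod_eq_of_lt (show p + i < L.length by omega)]
  refine ⟨((q - p : ℕ) : ℤ), ?_⟩
  rw [zpow_natCast, Equiv.Perm.swap_mul_pow_apply_of_forall_ne fun i hi => ?_, hpow _ le_rfl]
  · simp only [Nat.add_sub_cancel' hpq]
  · rw [hpow _ hi]
    exact h _ _ (by omega) (by omega)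

theorem sameCycle_swap_mul_formPerm_append {u v : List α} (huv : (u ++ v).Nodup)
    {i i' j j' : ℕ} (hi : i < i') (hi' : i' < u.length) (hj : j' < j) (hj' : j < v.length) :
    (Equiv.swap u[i] v[j] * (u ++ v).formPerm).SameCycle u[i'] v[j'] := by
  have hu : ∀ (m : ℕ) (hm : m < u.length), u[m] = (u ++ v)[m]'(by simp; omega) :=
    fun m hm => (getElem_append_left hm).symm
  have hv : ∀ (m : ℕ) (hm : m < v.length), v[m] = (u ++ v)[u.length + m]'(by simp; omega) :=
    fun m hm => by simp
  rw [hu i, hu i', hv j, hv j']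
  refine sameCycle_swap_mul_formPerm_getElem huv (by omega) (by simp; omega) fun m hm h1 h2 => ?_
  simp only [ne_eq, huv.getElem_inj_iff]
  omega

end List

theorem stmt12 {α : Type*} [LinearOrder α] (k l t : ℕ)
    (b : Fin k → α) (c : Fin l → α) (hb : StrictMono b) (hc : StrictMono c)
    (hbc : ∀ (i : Fin k) (j : Fin l), b i < c j)
    (I : Fin t → Fin k) (J : Fin t → Fin l)
    (hI : StrictMono I) (hJ : StrictAnti J)
    (r s : Fin t) (hrs : r ≠ s) :
    (Equiv.swap (b (I r)) (c (J r)) *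
        List.formPerm (List.ofFn b ++ List.ofFn c)).SameCycle
      (b (I s)) (c (J s)) := by
  have hnodup : (List.ofFn b ++ List.ofFn c).Nodup :=
    List.nodup_append.mpr ⟨List.nodup_ofFn.mpr hb.injective, List.nodup_ofFn.mpr hc.injective,
      by simpa using fun i j => (hbc i j).ne⟩
  rcases hrs.lt_or_gt with hrs | hsr
  · simpa using List.sameCycle_swap_mul_formPerm_append hnodup
      (i := I r) (i' := I s) (j := J r) (j' := J s) (hI hrs) (by simp) (hJ hrs) (by simp)
  · -- rotating the cycle to start at `c 0` swaps the roles of `b` and `c`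
    have hrot : (List.ofFn b ++ List.ofFn c).formPerm = (List.ofFn c ++ List.ofFn b).formPerm :=
      List.formPerm_eq_of_isRotated hnodup List.isRotated_append
    rw [hrot, Equiv.swap_comm]
    simpa using (List.sameCycle_swap_mul_formPerm_append (List.nodup_append_comm.mp hnodup)
      (i := J r) (i' := J s) (j := I r) (j' := I s) (hJ hsr) (by simp) (hI hsr) (by simp)).symm
end
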